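/- Let m ∈ ℝ, B > 0, t > 0, x ≥ 0 and let r ≥ 1 be an integer. Then (2/π) ∫₀^∞ (−Bt)^r · (m/(2·r!)) · k^{6r−2} · e^{−Bk⁴t} · cos(kx) dk = (−1)^r · [ (m Γ(3r/2 − 1/4) / (4π (Bt)^{r/2 − 1/4} · r!)) · ₁F₃(3r/2 − 1/4; 1/4, 1/2, 3/4; x⁴/(256Bt)) − (m x² Γ(3r/2 + 1/4) / (8π (Bt)^{r/2 + 1/4} · r!)) · ₁F₃(3r/2 + 1/4; 3/4, 5/4, 3/2; x⁴/(256Bt)) ], the integrand being integrable on (0,∞). -/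

import Mathlib

/-!
Expand `cos (k x)` in its Taylor series and integrate termwise: each term is a quartic Gaussian
moment `∫₀^∞ k^p e^{-c k⁴} dk = Γ((p+1)/4) / (4 c^{(p+1)/4})`. The series of absolute values is the
same series with all signs positive, which converges, so the interchange is justified. Splitting
the summation index by parity, `Γ(d + j) = Γ(d) (d)_j` and the Gauss multiplication formulas
`(4j)! = 256^j j! (1/4)_j (1/2)_j (3/4)_j`, `(4j+2)! = 2·256^j j! (3/4)_j (5/4)_j (3/2)_j`
turn the even and odd parts into the two `₁F₃` series.
-/

open MeasureTheory

/-- Pochhammer symbol (rising factorial) `(a)_k = a(a+1)⋯(a+k-1)`. -/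
noncomputable def poch (a : ℝ) (k : ℕ) : ℝ := ∏ i ∈ Finset.range k, (a + (i : ℝ))

/-- Generalized hypergeometric function `₁F₃(a; b₁, b₂, b₃; z)`. -/
noncomputable def F13 (a b₁ b₂ b₃ z : ℝ) : ℝ :=
  ∑' k : ℕ, poch a k / (poch b₁ k * poch b₂ k * poch b₃ k) * z ^ k / (Nat.factorial k)

open Real Set
open scoped Nat

@[simp]
lemma poch_zero (a : ℝ) : poch a 0 = 1 := by simp [poch]

lemma poch_succ (a : ℝ) (k : ℕ) : poch a (k + 1) = poch a k * (a + k) := by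
  simp [poch, Finset.prod_range_succ]

lemma poch_pos {a : ℝ} (ha : 0 < a) (k : ℕ) : 0 < poch a k := by
  induction k with
  | zero => simp
  | succ n ih => rw [poch_succ]; positivity

lemma Gamma_add_natCast_eq_mul_poch {a : ℝ} (ha : 0 < a) (k : ℕ) :
    Gamma (a + k) = Gamma a * poch a k := by
  induction k with
  | zero => simp
  | succ n ih =>
    rw [Nat.cast_succ, ← add_assoc, Gamma_add_one (by positivity), ih, poch_succ]
    ring

lemma factorial_four_mul (j : ℕ) :
    ((4 * j)! : ℝ) = 256 ^ j * j ! * poch (1/4) j * poch (1/2) j * poch (3/4) j := by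
  induction j with
  | zero => simp
  | succ n ih =>
    rw [show 4 * (n + 1) = 4 * n + 1 + 1 + 1 + 1 by ring]
    simp only [Nat.factorial_succ, poch_succ]
    push_cast
    rw [ih]
    ring

lemma factorial_four_mul_add_two (j : ℕ) :
    ((4 * j + 2)! : ℝ) = 2 * 256 ^ j * j ! * poch (3/4) j * poch (5/4) j * poch (3/2) j := by
  induction j with
  | zero => simp
  | succ n ih =>
    rw [show 4 * (n + 1) + 2 = 4 * n + 2 + 1 + 1 + 1 + 1 by ring, Nat.factorial_succ,
      Nat.factorial_succ, Nat.factorial_succ, Nat.factorial_succ]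
    push_cast
    rw [ih, Nat.factorial_succ, poch_succ, poch_succ, poch_succ]
    push_cast
    ring

noncomputable def F13Term (a b₁ b₂ b₃ z : ℝ) (k : ℕ) : ℝ :=
  poch a k / (poch b₁ k * poch b₂ k * poch b₃ k) * z ^ k / k !

section F13Term

variable {a b₁ b₂ b₃ z : ℝ}

lemma F13Term_nonneg (ha : 0 < a) (hb₁ : 0 < b₁) (hb₂ : 0 < b₂) (hb₃ : 0 < b₃) (hz : 0 ≤ z)
    (k : ℕ) : 0 ≤ F13Term a b₁ b₂ b₃ z k := by
  have := poch_pos ha k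
  have := poch_pos hb₁ k
  have := poch_pos hb₂ k
  have := poch_pos hb₃ k
  unfold F13Term
  positivity

lemma F13Term_succ (hb₁ : 0 < b₁) (hb₂ : 0 < b₂) (hb₃ : 0 < b₃) (k : ℕ) :
    F13Term a b₁ b₂ b₃ z (k + 1) =
      F13Term a b₁ b₂ b₃ z k * ((a + k) * z / ((b₁ + k) * (b₂ + k) * (b₃ + k) * (k + 1))) := by
  have := (poch_pos hb₁ k).ne'
  have := (poch_pos hb₂ k).ne'
  have := (poch_pos hb₃ k).ne'
  simp only [F13Term, poch_succ, Nat.factorial_succ, pow_succ]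
  push_cast
  field_simp

lemma F13Term_ratio_le_half (hb₁ : 0 < b₁) (hb₂ : 0 < b₂) (hb₃ : 0 < b₃) (hz : 0 ≤ z) {j : ℝ}
    (hj : 1 ≤ j) (hja : a ≤ j) (hjz : 4 * z ≤ j) :
    (a + j) * z / ((b₁ + j) * (b₂ + j) * (b₃ + j) * (j + 1)) ≤ 1 / 2 := by
  rw [div_le_iff₀ (by positivity)]
  have hj4 : j * j * j * j ≤ (b₁ + j) * (b₂ + j) * (b₃ + j) * (j + 1) := by
    gcongr <;> linarith
  have hj2 : j * j ≤ j * j * j * j := by nlinarith [mul_le_mul hj hj zero_le_one (by linarith)]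
  nlinarith [mul_le_mul_of_nonneg_right hja hz]

lemma summable_F13Term (ha : 0 < a) (hb₁ : 0 < b₁) (hb₂ : 0 < b₂) (hb₃ : 0 < b₃) (hz : 0 ≤ z) :
    Summable (F13Term a b₁ b₂ b₃ z) := by
  refine summable_of_ratio_norm_eventually_le (r := 1 / 2) (by norm_num) ?_
  filter_upwards [tendsto_natCast_atTop_atTop.eventually_ge_atTop (max (max a (4 * z)) 1)]
    with j hj
  simp only [max_le_iff] at hj
  have hnonneg := F13Term_nonneg ha hb₁ hb₂ hb₃ hz
  rw [norm_of_nonneg (hnonneg _), norm_of_nonneg (hnonneg _), F13Term_succ hb₁ hb₂ hb₃, mul_comm]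
  exact mul_le_mul_of_nonneg_right
    (F13Term_ratio_le_half hb₁ hb₂ hb₃ hz hj.2 hj.1.1 hj.1.2) (hnonneg j)

lemma hasSum_F13Term (ha : 0 < a) (hb₁ : 0 < b₁) (hb₂ : 0 < b₂) (hb₃ : 0 < b₃) (hz : 0 ≤ z) :
    HasSum (F13Term a b₁ b₂ b₃ z) (F13 a b₁ b₂ b₃ z) :=
  (summable_F13Term ha hb₁ hb₂ hb₃ hz).hasSum

end F13Term

lemma pow_mul_exp_neg_mul_pow_four_eq_rpow (c : ℝ) (p : ℕ) :
    (fun k : ℝ => k ^ p * exp (-c * k ^ 4)) = fun k => k ^ (p : ℝ) * exp (-c * k ^ (4 : ℝ)) := by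
  ext k
  norm_cast

section QuarticMoment

variable {c : ℝ}

lemma integrableOn_pow_mul_exp_neg_mul_pow_four (hc : 0 < c) (p : ℕ) :
    IntegrableOn (fun k : ℝ => k ^ p * exp (-c * k ^ 4)) (Ioi 0) := by
  rw [pow_mul_exp_neg_mul_pow_four_eq_rpow]
  exact integrableOn_rpow_mul_exp_neg_mul_rpow (by linarith [p.cast_nonneg (α := ℝ)])
    (by norm_num) hc

lemma integral_pow_mul_exp_neg_mul_pow_four (hc : 0 < c) (p : ℕ) :
    ∫ k in Ioi (0 : ℝ), k ^ p * exp (-c * k ^ 4) =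
      Gamma ((p + 1) / 4) / (4 * c ^ (((p : ℝ) + 1) / 4)) := by
  rw [pow_mul_exp_neg_mul_pow_four_eq_rpow,
    integral_rpow_mul_exp_neg_mul_rpow (by norm_num) (by linarith [p.cast_nonneg (α := ℝ)]) hc,
    neg_div, rpow_neg hc.le]
  field_simp

lemma integrableOn_pow_mul_exp_neg_mul_pow_four_mul_cos (hc : 0 < c) (p : ℕ) (x : ℝ) :
    IntegrableOn (fun k : ℝ => k ^ p * exp (-c * k ^ 4) * cos (k * x)) (Ioi 0) :=
  (integrableOn_pow_mul_exp_neg_mul_pow_four hc p).mul_bdd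
    (Continuous.aestronglyMeasurable (by fun_prop))
    (ae_of_all _ fun k => by simpa using abs_cos_le_one (k * x))

end QuarticMoment

/-- `∫₀^∞ (k x)^{2n} / (2n)! · k^s e^{-c k⁴} dk` when `d = (s + 1) / 4`. -/
noncomputable def cosQuarticCoeff (c d x : ℝ) (n : ℕ) : ℝ :=
  x ^ (2 * n) / (2 * n)! * (Gamma (d + n / 2) / (4 * c ^ (d + n / 2)))

section cosQuarticCoeff

variable {c d : ℝ}

lemma cosQuarticCoeff_two_mul (hc : 0 < c) (hd : 0 < d) (x : ℝ) (j : ℕ) :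
    cosQuarticCoeff c d x (2 * j) =
      Gamma d / (4 * c ^ d) * F13Term d (1/4) (1/2) (3/4) (x ^ 4 / (256 * c)) j := by
  have := (poch_pos (show (0 : ℝ) < 1/4 by norm_num) j).ne'
  have := (poch_pos (show (0 : ℝ) < 1/2 by norm_num) j).ne'
  have := (poch_pos (show (0 : ℝ) < 3/4 by norm_num) j).ne'
  have hdj : d + ((2 * j : ℕ) : ℝ) / 2 = d + j := by push_cast; ring
  rw [cosQuarticCoeff, F13Term, hdj, Gamma_add_natCast_eq_mul_poch hd, rpow_add_natCast hc.ne',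
    show 2 * (2 * j) = 4 * j by ring, factorial_four_mul, pow_mul, div_pow, mul_pow]
  field_simp

lemma cosQuarticCoeff_two_mul_add_one (hc : 0 < c) (hd : 0 < d) (x : ℝ) (j : ℕ) :
    cosQuarticCoeff c d x (2 * j + 1) =
      x ^ 2 * Gamma (d + 1/2) / (8 * c ^ (d + 1/2)) *
        F13Term (d + 1/2) (3/4) (5/4) (3/2) (x ^ 4 / (256 * c)) j := by
  have := (poch_pos (show (0 : ℝ) < 3/4 by norm_num) j).ne'
  have := (poch_pos (show (0 : ℝ) < 5/4 by norm_num) j).ne'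
  have := (poch_pos (show (0 : ℝ) < 3/2 by norm_num) j).ne'
  have hdj : d + ((2 * j + 1 : ℕ) : ℝ) / 2 = d + 1/2 + j := by push_cast; ring
  rw [cosQuarticCoeff, F13Term, hdj, Gamma_add_natCast_eq_mul_poch (by positivity),
    rpow_add_natCast hc.ne', show 2 * (2 * j + 1) = 4 * j + 2 by ring, factorial_four_mul_add_two,
    pow_add, pow_mul, div_pow, mul_pow]
  field_simp
  ring

lemma hasSum_cosQuarticCoeff_two_mul (hc : 0 < c) (hd : 0 < d) (x : ℝ) :
    HasSum (fun j => cosQuarticCoeff c d x (2 * j))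
      (Gamma d / (4 * c ^ d) * F13 d (1/4) (1/2) (3/4) (x ^ 4 / (256 * c))) := by
  simp only [cosQuarticCoeff_two_mul hc hd]
  exact (hasSum_F13Term hd (by norm_num) (by norm_num) (by norm_num) (by positivity)).mul_left _

lemma hasSum_cosQuarticCoeff_two_mul_add_one (hc : 0 < c) (hd : 0 < d) (x : ℝ) :
    HasSum (fun j => cosQuarticCoeff c d x (2 * j + 1))
      (x ^ 2 * Gamma (d + 1/2) / (8 * c ^ (d + 1/2)) *
        F13 (d + 1/2) (3/4) (5/4) (3/2) (x ^ 4 / (256 * c))) := by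
  simp only [cosQuarticCoeff_two_mul_add_one hc hd]
  exact (hasSum_F13Term (by positivity) (by norm_num) (by norm_num) (by norm_num)
    (by positivity)).mul_left _

lemma summable_cosQuarticCoeff (hc : 0 < c) (hd : 0 < d) (x : ℝ) :
    Summable (cosQuarticCoeff c d x) :=
  ((hasSum_cosQuarticCoeff_two_mul hc hd x).even_add_odd
    (hasSum_cosQuarticCoeff_two_mul_add_one hc hd x)).summable

lemma hasSum_neg_one_pow_mul_cosQuarticCoeff (hc : 0 < c) (hd : 0 < d) (x : ℝ) :
    HasSum (fun n => (-1) ^ n * cosQuarticCoeff c d x n)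
      (Gamma d / (4 * c ^ d) * F13 d (1/4) (1/2) (3/4) (x ^ 4 / (256 * c)) -
        x ^ 2 * Gamma (d + 1/2) / (8 * c ^ (d + 1/2)) *
          F13 (d + 1/2) (3/4) (5/4) (3/2) (x ^ 4 / (256 * c))) := by
  rw [sub_eq_add_neg]
  refine HasSum.even_add_odd ?_ ?_
  · simpa [pow_mul] using hasSum_cosQuarticCoeff_two_mul hc hd x
  · simpa [pow_succ, pow_mul] using (hasSum_cosQuarticCoeff_two_mul_add_one hc hd x).neg

end cosQuarticCoeff

lemma hasSum_cos_mul_pow_mul_exp (s : ℕ) (c x k : ℝ) :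
    HasSum (fun n : ℕ => (-1) ^ n * (x ^ (2 * n) / (2 * n)!) * (k ^ (s + 2 * n) * exp (-c * k ^ 4)))
      (k ^ s * exp (-c * k ^ 4) * cos (k * x)) := by
  refine ((hasSum_cos (k * x)).mul_left (k ^ s * exp (-c * k ^ 4))).congr_fun fun n => ?_
  ring

theorem integral_pow_mul_exp_neg_mul_pow_four_mul_cos {c : ℝ} (hc : 0 < c) (s : ℕ) (x : ℝ) :
    ∫ k in Ioi (0 : ℝ), k ^ s * exp (-c * k ^ 4) * cos (k * x) =
      Gamma ((s + 1) / 4) / (4 * c ^ (((s : ℝ) + 1) / 4)) *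
          F13 ((s + 1) / 4) (1/4) (1/2) (3/4) (x ^ 4 / (256 * c)) -
        x ^ 2 * Gamma ((s + 1) / 4 + 1/2) / (8 * c ^ (((s : ℝ) + 1) / 4 + 1/2)) *
          F13 ((s + 1) / 4 + 1/2) (3/4) (5/4) (3/2) (x ^ 4 / (256 * c)) := by
  set d : ℝ := ((s : ℝ) + 1) / 4
  have hd : 0 < d := by positivity
  set g : ℕ → ℝ → ℝ := fun n k =>
    (-1) ^ n * (x ^ (2 * n) / (2 * n)!) * (k ^ (s + 2 * n) * exp (-c * k ^ 4))
  have hmoment (n : ℕ) : ∫ k in Ioi (0 : ℝ), k ^ (s + 2 * n) * exp (-c * k ^ 4) =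
      Gamma (d + n / 2) / (4 * c ^ (d + n / 2)) := by
    rw [integral_pow_mul_exp_neg_mul_pow_four hc]
    congr 3 <;> push_cast <;> ring
  have hg_int (n : ℕ) : IntegrableOn (g n) (Ioi 0) :=
    (integrableOn_pow_mul_exp_neg_mul_pow_four hc _).const_mul _
  have hg_integral (n : ℕ) : ∫ k in Ioi (0 : ℝ), g n k = (-1) ^ n * cosQuarticCoeff c d x n := by
    rw [integral_const_mul, hmoment, cosQuarticCoeff, mul_assoc]
  have hg_norm (n : ℕ) : ∫ k in Ioi (0 : ℝ), ‖g n k‖ = cosQuarticCoeff c d x n := by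
    rw [cosQuarticCoeff, ← hmoment, ← integral_const_mul]
    refine setIntegral_congr_fun measurableSet_Ioi fun k (hk : 0 < k) => ?_
    simp only [g, norm_mul, norm_pow, norm_neg, norm_one, one_pow, one_mul, norm_div,
      Real.norm_natCast, pow_mul, norm_of_nonneg (sq_nonneg x), norm_of_nonneg hk.le,
      norm_of_nonneg (exp_pos _).le]
  calc ∫ k in Ioi (0 : ℝ), k ^ s * exp (-c * k ^ 4) * cos (k * x)
      = ∫ k in Ioi (0 : ℝ), ∑' n, g n k :=
        integral_congr_ae (ae_of_all _ fun k => (hasSum_cos_mul_pow_mul_exp s c x k).tsum_eq.symm)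
    _ = ∑' n, ∫ k in Ioi (0 : ℝ), g n k :=
        (integral_tsum_of_summable_integral_norm hg_int
          ((summable_cosQuarticCoeff hc hd x).congr fun n => (hg_norm n).symm)).symm
    _ = _ := by
        simp only [hg_integral]
        exact (hasSum_neg_one_pow_mul_cosQuarticCoeff hc hd x).tsum_eq

theorem inverse_fourier_cosine_of_outer_correction_general (m B : ℝ) (hB : 0 < B)
    (t : ℝ) (ht : 0 < t) (x : ℝ) (r : ℕ) (hr : 1 ≤ r) :
    IntegrableOn
      (fun k : ℝ => (-(B * t)) ^ r * (m / (2 * (Nat.factorial r))) * k ^ (6 * r - 2) *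
        Real.exp (-B * k ^ 4 * t) * Real.cos (k * x)) (Set.Ioi 0) ∧
    (2 / Real.pi) * ∫ k in Set.Ioi (0 : ℝ),
        (-(B * t)) ^ r * (m / (2 * (Nat.factorial r))) * k ^ (6 * r - 2) *
          Real.exp (-B * k ^ 4 * t) * Real.cos (k * x)
      = (-1 : ℝ) ^ r *
          (m * Real.Gamma (3 * r / 2 - 1/4) /
              (4 * Real.pi * (B * t) ^ ((r : ℝ)/2 - 1/4) * (Nat.factorial r)) *
            F13 (3 * r / 2 - 1/4) (1/4) (1/2) (3/4) (x ^ 4 / (256 * B * t))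
          - m * x ^ 2 * Real.Gamma (3 * r / 2 + 1/4) /
              (8 * Real.pi * (B * t) ^ ((r : ℝ)/2 + 1/4) * (Nat.factorial r)) *
            F13 (3 * r / 2 + 1/4) (3/4) (5/4) (3/2) (x ^ 4 / (256 * B * t))) := by
  have hc : 0 < B * t := mul_pos hB ht
  have hintegrand : (fun k : ℝ => (-(B * t)) ^ r * (m / (2 * r !)) * k ^ (6 * r - 2) *
      exp (-B * k ^ 4 * t) * cos (k * x)) = fun k => (-(B * t)) ^ r * (m / (2 * r !)) *
      (k ^ (6 * r - 2) * exp (-(B * t) * k ^ 4) * cos (k * x)) := by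
    ext k
    ring_nf
  have hd : (((6 * r - 2 : ℕ) : ℝ) + 1) / 4 = 3 * r / 2 - 1/4 := by
    rw [Nat.cast_sub (by omega)]
    push_cast
    ring
  have hpow₁ : (B * t) ^ (3 * (r : ℝ) / 2 - 1/4) = (B * t) ^ ((r : ℝ)/2 - 1/4) * (B * t) ^ r := by
    rw [← rpow_add_natCast hc.ne']
    ring_nf
  have hpow₂ : (B * t) ^ (3 * (r : ℝ) / 2 + 1/4) = (B * t) ^ ((r : ℝ)/2 + 1/4) * (B * t) ^ r := by
    rw [← rpow_add_natCast hc.ne']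
    ring_nf
  rw [hintegrand]
  refine ⟨(integrableOn_pow_mul_exp_neg_mul_pow_four_mul_cos hc _ x).const_mul _, ?_⟩
  rw [integral_const_mul, integral_pow_mul_exp_neg_mul_pow_four_mul_cos hc, hd,
    show 3 * (r : ℝ) / 2 - 1/4 + 1/2 = 3 * r / 2 + 1/4 by ring, hpow₁, hpow₂, neg_pow,
    show 256 * B * t = 256 * (B * t) by ring]
  field_simp

/-- Inverse Fourier cosine transform of the transformed `r`-th order outer correction term. -/
theorem inverse_fourier_cosine_of_outer_correction (m B : ℝ) (hB : 0 < B)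
    (t : ℝ) (ht : 0 < t) (x : ℝ) (hx : 0 ≤ x) (r : ℕ) (hr : 1 ≤ r) :
    IntegrableOn
      (fun k : ℝ => (-(B * t)) ^ r * (m / (2 * (Nat.factorial r))) * k ^ (6 * r - 2) *
        Real.exp (-B * k ^ 4 * t) * Real.cos (k * x)) (Set.Ioi 0) ∧
    (2 / Real.pi) * ∫ k in Set.Ioi (0 : ℝ),
        (-(B * t)) ^ r * (m / (2 * (Nat.factorial r))) * k ^ (6 * r - 2) *
          Real.exp (-B * k ^ 4 * t) * Real.cos (k * x)
      = (-1 : ℝ) ^ r *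
          (m * Real.Gamma (3 * r / 2 - 1/4) /
              (4 * Real.pi * (B * t) ^ ((r : ℝ)/2 - 1/4) * (Nat.factorial r)) *
            F13 (3 * r / 2 - 1/4) (1/4) (1/2) (3/4) (x ^ 4 / (256 * B * t))
          - m * x ^ 2 * Real.Gamma (3 * r / 2 + 1/4) /
              (8 * Real.pi * (B * t) ^ ((r : ℝ)/2 + 1/4) * (Nat.factorial r)) *
            F13 (3 * r / 2 + 1/4) (3/4) (5/4) (3/2) (x ^ 4 / (256 * B * t))) :=
  inverse_fourier_cosine_of_outer_correction_general m B hB t ht x r hr
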